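/- Let G be a locally finite group, A a finite alphabet, and X ⊆ A^G a G-SFT. Then the automorphism group Aut(X) of X is locally finite: every finite subset of Aut(X) generates a finite subgroup of Aut(X). -/

import Mathlib

open scoped Pointwise symmDiff

namespace LFPaper

variable {G A B : Type*}

/-- The right shift action: `(shift g x) h = x (h * g)`. -/
def shift [Group G] (g : G) (x : G → A) : G → A := fun h => x (h * g)

/-- Restriction of a configuration to a finite shape. -/
def restrictF (F : Finset G) (x : G → A) : F → A := fun a => x a

/-- A `G`-shift space: a closed, shift-invariant subset of the full shift. -/
def IsShiftSpace [Group G] [TopologicalSpace A] (X : Set (G → A)) : Prop :=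
  IsClosed X ∧ ∀ g : G, ∀ x ∈ X, shift g x ∈ X

/-- A `G`-shift of finite type: the set of configurations avoiding a finite
set of forbidden patterns on a finite shape. -/
def IsSFT [Group G] (X : Set (G → A)) : Prop :=
  ∃ (F : Finset G) (P : Set (F → A)),
    X = {x : G → A | ∀ g : G, restrictF F (shift g x) ∉ P}

/-- The `F`-language of `X`: all restrictions of elements of `X` to `F`. -/
def language (X : Set (G → A)) (F : Finset G) : Set (F → A) :=
  {w | ∃ x ∈ X, restrictF F x = w}

/-- Strong irreducibility of a shift. -/
def StronglyIrreducible [Group G] (X : Set (G → A)) : Prop :=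
  ∃ K : Finset G, ∀ (Fu Fv : Finset G) (u : Fu → A) (v : Fv → A),
    Disjoint (Fu : Set G) ((K : Set G) * (Fv : Set G)) →
    u ∈ language X Fu → v ∈ language X Fv →
    ∃ x ∈ X, restrictF Fu x = u ∧ restrictF Fv x = v

/-- The free `G`-extension of an `H`-shift `Y`: all configurations whose
restriction to every right coset of `H` (pulled back to `H`) lies in `Y`. -/
def freeExt [Group G] (H : Subgroup G) (Y : Set (H → A)) : Set (G → A) :=
  {x : G → A | ∀ g : G, (fun h : H => x ((h : G) * g)) ∈ Y}

/-- Local finiteness of a group: every finitely generated subgroup is finite. -/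
def IsLocallyFinite (G : Type*) [Group G] : Prop :=
  ∀ S : Finset G, Finite ↥(Subgroup.closure (S : Set G))

/-- A (left) Følner sequence for a countable group. -/
def IsFolner [Group G] (F : ℕ → Finset G) : Prop :=
  (∀ n, (F n).Nonempty) ∧ (∀ g : G, ∃ n, g ∈ F n) ∧
  ∀ g : G, Filter.Tendsto
    (fun n => (Set.ncard ((((fun h => g * h) '' (F n : Set G))) ∆ ((F n : Set G))) : ℝ) /
      ((F n).card : ℝ))
    Filter.atTop (nhds 0)

/-- Cardinality of the `F`-language. -/
noncomputable def langCard (X : Set (G → A)) (F : Finset G) : ℕ :=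
  (language X F).ncard

/-- A shift-commuting self-homeomorphism of `X` (an automorphism of the shift `X`). -/
def IsAutomorphism [Group G] [TopologicalSpace A] (X : Set (G → A)) (φ : Equiv.Perm X) : Prop :=
  Continuous φ ∧ Continuous φ.symm ∧
  ∀ (g : G) (x y : X), (y : G → A) = shift g (x : G → A) →
    (φ y : G → A) = shift g ((φ x : G → A))

/-!
Every automorphism of a subshift, and its inverse, is continuous on a compact space and hence a
sliding block code with a finite memory set. The memory sets of finitely many generators generate
a finite subgroup `H` of `G`; since memory sets multiply under composition, every element of the
group they generate has memory in `H`. A shift-commuting map with memory in `H` is determined by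
its local rule on `H`-patterns, and there are only finitely many such rules.
-/

section Cylinders

variable {ι : Type*} [TopologicalSpace A]

theorem setOf_eqOn_mem_nhds [DiscreteTopology A] (x : ι → A) {F : Set ι} (hF : F.Finite) :
    {y | Set.EqOn y x F} ∈ nhds x := by
  convert set_pi_mem_nhds hF fun i _ => isOpen_discrete {x i} |>.mem_nhds rfl using 1
  ext y
  simp [Set.EqOn]

theorem exists_finset_setOf_eqOn_subset {x : ι → A} {U : Set (ι → A)} (hU : U ∈ nhds x) :
    ∃ F : Finset ι, {y | Set.EqOn y x F} ⊆ U := by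
  rw [nhds_pi, Filter.mem_pi'] at hU
  obtain ⟨F, t, ht, hFt⟩ := hU
  exact ⟨F, fun y hy => hFt fun i hi => (hy hi).symm ▸ mem_of_mem_nhds (ht i)⟩

/-- The compactness half of the Curtis–Hedlund–Lyndon theorem. -/
theorem exists_finset_eqOn_imp_eq [DiscreteTopology A] {X : Set (ι → A)} (hX : IsCompact X)
    [TopologicalSpace B] [DiscreteTopology B] {f : X → B} (hf : Continuous f) :
    ∃ F : Finset ι, ∀ x y : X, Set.EqOn (x : ι → A) y F → f x = f y := by
  classical
  have hlocal : ∀ x : X, ∃ F : Finset ι, ∀ y : X, Set.EqOn (y : ι → A) x F → f y = f x := by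
    intro x
    have hU : f ⁻¹' {f x} ∈ nhds x := hf.continuousAt (isOpen_discrete _ |>.mem_nhds rfl)
    rw [nhds_subtype, Filter.mem_comap] at hU
    obtain ⟨V, hV, hVU⟩ := hU
    obtain ⟨F, hF⟩ := exists_finset_setOf_eqOn_subset hV
    exact ⟨F, fun y hy => hVU (hF hy)⟩
  choose F hF using hlocal
  have := isCompact_iff_compactSpace.mp hX
  obtain ⟨t, ht⟩ := CompactSpace.elim_nhds_subcover
    (fun x : X => {y : X | Set.EqOn (y : ι → A) x (F x)}) fun x =>
      continuous_subtype_val.continuousAt.preimage_mem_nhds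
        (setOf_eqOn_mem_nhds (x : ι → A) (F x).finite_toSet)
  refine ⟨t.biUnion F, fun x y hxy => ?_⟩
  have hx : x ∈ ⋃ z ∈ t, {y : X | Set.EqOn (y : ι → A) z (F z)} := ht ▸ Set.mem_univ x
  obtain ⟨z, hz, hxz⟩ := Set.mem_iUnion₂.mp hx
  have hFz : (F z : Set ι) ⊆ t.biUnion F :=
    Finset.coe_subset.mpr (Finset.subset_biUnion_of_mem F hz)
  have hyz : Set.EqOn (y : ι → A) z (F z) := (hxy.mono hFz).symm.trans hxz
  rw [hF z x hxz, hF z y hyz]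

end Cylinders

section Automorphisms

variable [Group G] {X : Set (G → A)}

theorem shift_shift (g g' : G) (x : G → A) : shift g' (shift g x) = shift (g' * g) x := by
  funext h
  simp [shift, mul_assoc]

theorem IsSFT.isShiftSpace [TopologicalSpace A] [DiscreteTopology A] (hX : IsSFT X) :
    IsShiftSpace X := by
  obtain ⟨F, P, rfl⟩ := hX
  refine ⟨?_, fun g x hx g' => shift_shift g g' x ▸ hx (g' * g)⟩
  simp only [Set.ofPred_forall]
  exact isClosed_iInter fun g => (isClosed_discrete Pᶜ).preimage
    (f := fun x => restrictF F (shift g x)) (continuous_pi fun a => continuous_apply ((a : G) * g))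

def CommutesWithShift (X : Set (G → A)) (φ : Equiv.Perm X) : Prop :=
  ∀ (g : G) (x y : X), (y : G → A) = shift g (x : G → A) →
    (φ y : G → A) = shift g ((φ x : G → A))

/-- Together with `CommutesWithShift`, this says that `φ` is a sliding block code with memory
set `E`. -/
def HasMemory (X : Set (G → A)) (E : Set G) (φ : Equiv.Perm X) : Prop :=
  ∀ x y : X, Set.EqOn (x : G → A) y E → (φ x : G → A) 1 = (φ y : G → A) 1

theorem commutesWithShift_one : CommutesWithShift X 1 := by
  intro g x y h
  simpa using h

theorem CommutesWithShift.mul {φ ψ : Equiv.Perm X} (hφ : CommutesWithShift X φ)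
    (hψ : CommutesWithShift X ψ) : CommutesWithShift X (φ * ψ) :=
  fun g x y h => hφ g (ψ x) (ψ y) (hψ g x y h)

theorem CommutesWithShift.inv (hX : ∀ g : G, ∀ x ∈ X, shift g x ∈ X) {φ : Equiv.Perm X}
    (hφ : CommutesWithShift X φ) : CommutesWithShift X φ⁻¹ := by
  intro g x y hy
  have hw : φ ⟨shift g (φ⁻¹ x : G → A), hX g _ (φ⁻¹ x).2⟩ = y := Subtype.ext <| by
    rw [hφ g (φ⁻¹ x) ⟨_, hX g _ (φ⁻¹ x).2⟩ rfl, hy]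
    simp
  simp [← hw]

theorem CommutesWithShift.apply_eq (hX : ∀ g : G, ∀ x ∈ X, shift g x ∈ X) {φ : Equiv.Perm X}
    (hφ : CommutesWithShift X φ) (x : X) (g : G) :
    (φ x : G → A) g = (φ ⟨shift g (x : G → A), hX g x x.2⟩ : G → A) 1 := by
  rw [hφ g x ⟨_, hX g x x.2⟩ rfl]
  simp [shift]

theorem CommutesWithShift.ext (hX : ∀ g : G, ∀ x ∈ X, shift g x ∈ X) {φ ψ : Equiv.Perm X}
    (hφ : CommutesWithShift X φ) (hψ : CommutesWithShift X ψ)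
    (h : ∀ x, (φ x : G → A) 1 = (ψ x : G → A) 1) : φ = ψ := by
  ext x g
  rw [hφ.apply_eq hX, hψ.apply_eq hX, h]

theorem HasMemory.mono {E E' : Set G} (hE : E ⊆ E') {φ : Equiv.Perm X} (hφ : HasMemory X E φ) :
    HasMemory X E' φ :=
  fun x y hxy => hφ x y (hxy.mono hE)

theorem hasMemory_one {E : Set G} (hE : (1 : G) ∈ E) : HasMemory X E 1 :=
  fun _ _ hxy => hxy hE

theorem HasMemory.mul (hX : ∀ g : G, ∀ x ∈ X, shift g x ∈ X) {H : Subgroup G}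
    {φ ψ : Equiv.Perm X} (hφ : HasMemory X H φ) (hψ : HasMemory X H ψ)
    (hψc : CommutesWithShift X ψ) : HasMemory X H (φ * ψ) := by
  intro x y hxy
  refine hφ (ψ x) (ψ y) fun g hg => ?_
  rw [hψc.apply_eq hX x g, hψc.apply_eq hX y g]
  exact hψ _ _ fun k hk => hxy (H.mul_mem hk hg)

theorem IsAutomorphism.exists_hasMemory [TopologicalSpace A] [DiscreteTopology A] [Finite A]
    (hX : IsClosed X) {φ : Equiv.Perm X} (hφ : IsAutomorphism X φ) :
    ∃ F : Finset G, HasMemory X F φ ∧ HasMemory X F φ⁻¹ := by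
  classical
  have hXc : IsCompact X := hX.isCompact
  obtain ⟨F, hF⟩ := exists_finset_eqOn_imp_eq hXc (f := fun x => (φ x : G → A) 1)
    ((continuous_apply 1).comp (continuous_subtype_val.comp hφ.1))
  obtain ⟨F', hF'⟩ := exists_finset_eqOn_imp_eq hXc (f := fun x => (φ⁻¹ x : G → A) 1)
    ((continuous_apply 1).comp (continuous_subtype_val.comp hφ.2.1))
  exact ⟨F ∪ F', HasMemory.mono (Finset.coe_subset.mpr Finset.subset_union_left) hF,
    HasMemory.mono (Finset.coe_subset.mpr Finset.subset_union_right) hF'⟩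

/-- The local rule of `φ`, as a relation rather than a function so that no default symbol is
needed. -/
def localRule (E : Set G) (φ : Equiv.Perm X) : Set ((E → A) × A) :=
  {p | ∃ x : X, E.domRestrict (x : G → A) = p.1 ∧ (φ x : G → A) 1 = p.2}

theorem finite_setOf_commutesWithShift_hasMemory [Finite A]
    (hX : ∀ g : G, ∀ x ∈ X, shift g x ∈ X) {E : Set G} (hE : E.Finite) :
    {φ : Equiv.Perm X | CommutesWithShift X φ ∧ HasMemory X E φ}.Finite := by
  have := hE.to_subtype
  refine Set.Finite.of_injOn (f := localRule E) (Set.mapsTo_univ _ _) ?_ Set.finite_univ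
  rintro φ ⟨hφc, -⟩ ψ ⟨hψc, hψm⟩ h
  refine hφc.ext hX hψc fun x => ?_
  obtain ⟨y, hyx, hy⟩ : (E.domRestrict (x : G → A), (φ x : G → A) 1) ∈ localRule E ψ :=
    h ▸ ⟨x, rfl, rfl⟩
  exact hy.symm.trans (hψm y x (Set.domRestrict_eq_domRestrict_iff.mp hyx))

theorem closure_subset_setOf_hasMemory (hX : ∀ g : G, ∀ x ∈ X, shift g x ∈ X) {H : Subgroup G}
    {S : Set (Equiv.Perm X)}
    (hS : ∀ φ ∈ S, CommutesWithShift X φ ∧ HasMemory X H φ ∧ HasMemory X H φ⁻¹) :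
    (Subgroup.closure S : Set (Equiv.Perm X)) ⊆
      {φ | CommutesWithShift X φ ∧ HasMemory X H φ} := by
  intro φ hφ
  induction hφ using Subgroup.closure_induction'' with
  | mem ψ hψ => exact ⟨(hS ψ hψ).1, (hS ψ hψ).2.1⟩
  | inv_mem ψ hψ => exact ⟨(hS ψ hψ).1.inv hX, (hS ψ hψ).2.2⟩
  | one => exact ⟨commutesWithShift_one, hasMemory_one H.one_mem⟩
  | mul ψ χ _ _ hψ hχ => exact ⟨hψ.1.mul hχ.1, hψ.2.mul hX hχ.2 hχ.1⟩

end Automorphisms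

theorem aut_locallyFinite_of_locallyFinite_general [Group G] (hLF : IsLocallyFinite G)
    [Fintype A] [TopologicalSpace A] [DiscreteTopology A]
    (X : Set (G → A)) (hX : IsSFT X)
    (S : Finset (Equiv.Perm X)) (hS : ∀ φ ∈ S, IsAutomorphism X φ) :
    Finite ↥(Subgroup.closure (S : Set (Equiv.Perm X))) := by
  classical
  obtain ⟨hXc, hXs⟩ := hX.isShiftSpace
  choose! M hM using fun φ hφ => (hS φ hφ).exists_hasMemory hXc
  let H := Subgroup.closure (S.biUnion M : Set G)
  have : Finite H := hLF _
  have hH : (H : Set G).Finite := Set.toFinite _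
  have hMH : ∀ φ ∈ S, (M φ : Set G) ⊆ H := fun φ hφ =>
    (Finset.coe_subset.mpr (Finset.subset_biUnion_of_mem M hφ)).trans Subgroup.subset_closure
  refine ((finite_setOf_commutesWithShift_hasMemory hXs hH).subset
    (closure_subset_setOf_hasMemory hXs fun φ hφ => ⟨(hS φ hφ).2.2, ?_, ?_⟩)).to_subtype
  · exact (hM φ hφ).1.mono (hMH φ hφ)
  · exact (hM φ hφ).2.mono (hMH φ hφ)

/-- Over a locally finite group, the automorphism group of every `G`-SFT is
locally finite: any finite set of automorphisms generates a finite subgroup. -/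
theorem aut_locallyFinite_of_locallyFinite [Group G] (hLF : IsLocallyFinite G)
    [Fintype A] [Nonempty A] [TopologicalSpace A] [DiscreteTopology A]
    (X : Set (G → A)) (hX : IsSFT X)
    (S : Finset (Equiv.Perm X)) (hS : ∀ φ ∈ S, IsAutomorphism X φ) :
    Finite ↥(Subgroup.closure (S : Set (Equiv.Perm X))) :=
  aut_locallyFinite_of_locallyFinite_general hLF X hX S hS

end LFPaper
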